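/- Let $A_i,B_i$ satisfy $\deg B_i+1\leq\deg A_i=a_i+1$ for $i=1,2$, and in the borderline case $a_1=b_1+1$, $a_2=b_2+1$ assume $\alpha_1(a_1+1)\alpha_2(a_2+1)-\beta_1(b_1+1)\beta_2(b_2+1)\neq 0$. Then the space of formal power series $F(z,w)$ satisfying $[(\partial_z+w)B_2(\partial_w)-A_2(\partial_w)]F=0$ and $[(\partial_w+z)B_1(\partial_z)-A_1(\partial_z)]F=0$ has dimension exactly $(a_1+1)(a_2+1)$. -/

import Mathlib

open Polynomial

/-- The space of coefficient arrays `(μ_{jk})`, encoding the formal generating function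
`F(z,w) = ∑_{j,k} μ_{jk} z^j w^k / (j! k!)`. -/
abbrev Coeffs : Type := ℕ → ℕ → ℂ

/-- The operator `∂_z` on generating functions, acting on coefficient arrays. -/
noncomputable def Dz : Module.End ℂ Coeffs where
  toFun μ := fun j k => μ (j + 1) k
  map_add' _ _ := rfl
  map_smul' _ _ := rfl

/-- The operator `∂_w` on generating functions, acting on coefficient arrays. -/
noncomputable def Dw : Module.End ℂ Coeffs where
  toFun μ := fun j k => μ j (k + 1)
  map_add' _ _ := rfl
  map_smul' _ _ := rfl

/-- Multiplication by `z` on generating functions, acting on coefficient arrays. -/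
noncomputable def Mz : Module.End ℂ Coeffs where
  toFun μ := fun j k => (j : ℂ) * μ (j - 1) k
  map_add' x y := by funext j k; simp [mul_add]
  map_smul' c x := by funext j k; simp [smul_eq_mul]; ring

/-- Multiplication by `w` on generating functions, acting on coefficient arrays. -/
noncomputable def Mw : Module.End ℂ Coeffs where
  toFun μ := fun j k => (k : ℂ) * μ j (k - 1)
  map_add' x y := by funext j k; simp [mul_add]
  map_smul' c x := by funext j k; simp [smul_eq_mul]; ring

/-- A polynomial `∑_{j=0}^{n} c_j X^j` given by its list of coefficients. -/
noncomputable def polyOf (n : ℕ) (c : ℕ → ℂ) : Polynomial ℂ :=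
  ∑ j ∈ Finset.range (n + 1), C (c j) * X ^ j

/-!
Write `L₁ = (∂_z + w)B₂(∂_w) - A₂(∂_w)` and `L₂ = (∂_w + z)B₁(∂_z) - A₁(∂_z)` (`Lw` and `Lz`);
the Heisenberg relations `[∂_z, z] = [∂_w, w] = 1` make them commute. Outside the grid
`j ≤ a₁, k ≤ a₂` every coefficient is the leading term of one equation whose other terms come
earlier in a well-founded order: `L₁` for the columns `k > a₂`, `L₂` in the rows `k < a₂`, and in
the row `k = a₂` the combination `A₂[a₂+1] L₂ + B₁(∂_z) L₁`, whose leading coefficient is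
`B₁[a₁] B₂[a₂] - A₁[a₁+1] A₂[a₂+1]`. Hence grid data extend uniquely to a solution of these
equations. Such a solution satisfies `L₁μ = 0`, while `L₂μ` solves `L₁` and vanishes on the strip
`k ≤ a₂`, hence everywhere.
-/

open Finset

theorem WellFounded.existsUnique_fixedPoint {ι α : Type*} [Nonempty α] {r : ι → ι → Prop}
    (hr : WellFounded r) (F : (ι → α) → ι → α)
    (hF : ∀ μ ν i, (∀ j, r j i → μ j = ν j) → F μ i = F ν i) :
    ∃! μ : ι → α, F μ = μ := by
  classical
  let μ := hr.fix fun i g => F (fun j => if h : r j i then g j h else Classical.arbitrary α) i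
  have hμ : F μ = μ := funext fun i => by
    rw [show μ i = _ from hr.fix_eq _ i]
    exact hF _ _ i fun j hj => by rw [dif_pos hj]
  refine ⟨μ, hμ, fun ν hν => funext fun i => ?_⟩
  induction i using hr.induction with
  | _ i ih => rw [← hν, ← hμ]; exact hF _ _ i ih

lemma Dz_apply (μ : Coeffs) (j k : ℕ) : Dz μ j k = μ (j + 1) k := rfl
lemma Dw_apply (μ : Coeffs) (j k : ℕ) : Dw μ j k = μ j (k + 1) := rfl
lemma Mz_apply (μ : Coeffs) (j k : ℕ) : Mz μ j k = j * μ (j - 1) k := rfl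
lemma Mw_apply (μ : Coeffs) (j k : ℕ) : Mw μ j k = k * μ j (k - 1) := rfl

lemma Dz_pow_apply (n : ℕ) (μ : Coeffs) (j k : ℕ) : (Dz ^ n) μ j k = μ (j + n) k := by
  induction n generalizing j with
  | zero => rfl
  | succ n ih => rw [pow_succ', Module.End.mul_apply, Dz_apply, ih, add_right_comm, add_assoc]

lemma Dw_pow_apply (n : ℕ) (μ : Coeffs) (j k : ℕ) : (Dw ^ n) μ j k = μ j (k + n) := by
  induction n generalizing k with
  | zero => rfl
  | succ n ih => rw [pow_succ', Module.End.mul_apply, Dw_apply, ih, add_right_comm, add_assoc]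

lemma aeval_Dz_apply {p : ℂ[X]} {n : ℕ} (hp : p.natDegree < n) (μ : Coeffs) (j k : ℕ) :
    aeval Dz p μ j k = ∑ i ∈ range n, p.coeff i * μ (j + i) k := by
  simp [aeval_eq_sum_range' hp, Finset.sum_apply, Dz_pow_apply]

lemma aeval_Dw_apply {p : ℂ[X]} {n : ℕ} (hp : p.natDegree < n) (μ : Coeffs) (j k : ℕ) :
    aeval Dw p μ j k = ∑ i ∈ range n, p.coeff i * μ j (k + i) := by
  simp [aeval_eq_sum_range' hp, Finset.sum_apply, Dw_pow_apply]

lemma sum_range_succ_mul_of_forall_lt {d : ℕ} (g : ℕ → ℂ) {f : ℕ → ℂ}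
    (hf : ∀ i < d, f i = 0) : ∑ i ∈ range (d + 1), g i * f i = g d * f d := by
  rw [sum_range_succ, sum_eq_zero fun i hi => by rw [hf i (mem_range.1 hi), mul_zero], zero_add]

lemma aeval_Dz_apply_of_forall_lt {p : ℂ[X]} {d : ℕ} (hp : p.natDegree ≤ d) {μ : Coeffs} {j k : ℕ}
    (hμ : ∀ i < d, μ (j + i) k = 0) : aeval Dz p μ j k = p.coeff d * μ (j + d) k := by
  rw [aeval_Dz_apply (Nat.lt_succ_of_le hp), sum_range_succ_mul_of_forall_lt _ hμ]

lemma aeval_Dw_apply_of_forall_lt {p : ℂ[X]} {d : ℕ} (hp : p.natDegree ≤ d) {μ : Coeffs} {j k : ℕ}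
    (hμ : ∀ i < d, μ j (k + i) = 0) : aeval Dw p μ j k = p.coeff d * μ j (k + d) := by
  rw [aeval_Dw_apply (Nat.lt_succ_of_le hp), sum_range_succ_mul_of_forall_lt _ hμ]

lemma aeval_Dz_apply_eq_zero {p : ℂ[X]} {d : ℕ} (hp : p.natDegree ≤ d) {μ : Coeffs} {j k : ℕ}
    (hμ : ∀ i ≤ d, μ (j + i) k = 0) : aeval Dz p μ j k = 0 := by
  rw [aeval_Dz_apply_of_forall_lt hp fun i hi => hμ i hi.le, hμ d le_rfl, mul_zero]

lemma aeval_Dw_apply_eq_zero {p : ℂ[X]} {d : ℕ} (hp : p.natDegree ≤ d) {μ : Coeffs} {j k : ℕ}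
    (hμ : ∀ i ≤ d, μ j (k + i) = 0) : aeval Dw p μ j k = 0 := by
  rw [aeval_Dw_apply_of_forall_lt hp fun i hi => hμ i hi.le, hμ d le_rfl, mul_zero]

lemma Dz_mul_Mz_sub : Dz * Mz - Mz * Dz = 1 := by
  ext μ j k
  rcases j with _ | j
  · simp [Dz_apply, Mz_apply]
  · simp [Dz_apply, Mz_apply]; ring

lemma Dw_mul_Mw_sub : Dw * Mw - Mw * Dw = 1 := by
  ext μ j k
  rcases k with _ | k
  · simp [Dw_apply, Mw_apply]
  · simp [Dw_apply, Mw_apply]; ring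

lemma commute_Dz_Dw : Commute Dz Dw := LinearMap.ext fun _ => rfl
lemma commute_Dz_Mw : Commute Dz Mw := LinearMap.ext fun _ => rfl
lemma commute_Dw_Mz : Commute Dw Mz := LinearMap.ext fun _ => rfl
lemma commute_Mw_Mz : Commute Mw Mz := by
  ext μ j k
  simp [Mw_apply, Mz_apply]; ring

lemma commute_Dz_add_Mw_Dw_add_Mz : Commute (Dz + Mw) (Dw + Mz) := by
  have h : (Dz + Mw) * (Dw + Mz) - (Dw + Mz) * (Dz + Mw) =
      (Dz * Dw - Dw * Dz) + (Dz * Mz - Mz * Dz) - (Dw * Mw - Mw * Dw) + (Mw * Mz - Mz * Mw) := by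
    noncomm_ring
  rw [Commute, SemiconjBy, ← sub_eq_zero, h, commute_Dz_Dw.eq, commute_Mw_Mz.eq, Dz_mul_Mz_sub,
    Dw_mul_Mw_sub]
  simp

lemma Commute.aeval_right {A : Type*} [Ring A] [Algebra ℂ A] {x y : A} (h : Commute x y)
    (p : ℂ[X]) : Commute x (aeval y p) := by
  rw [aeval_eq_sum_range]
  exact Commute.sum_right _ _ _ fun i _ => (h.pow_right i).smul_right _

noncomputable def Lw (A B : ℂ[X]) : Module.End ℂ Coeffs := (Dz + Mw) * aeval Dw B - aeval Dw A

noncomputable def Lz (A B : ℂ[X]) : Module.End ℂ Coeffs := (Dw + Mz) * aeval Dz B - aeval Dz A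

lemma Lw_apply (A B : ℂ[X]) (μ : Coeffs) (j k : ℕ) :
    Lw A B μ j k = aeval Dw B μ (j + 1) k + k * aeval Dw B μ j (k - 1) - aeval Dw A μ j k := rfl

lemma Lz_apply (A B : ℂ[X]) (μ : Coeffs) (j k : ℕ) :
    Lz A B μ j k = aeval Dz B μ j (k + 1) + j * aeval Dz B μ (j - 1) k - aeval Dz A μ j k := rfl

lemma commute_Lw_Lz (A1 B1 A2 B2 : ℂ[X]) : Commute (Lw A2 B2) (Lz A1 B1) := by
  have hLz : ∀ x, Commute x (Dw + Mz) → Commute x Dz → Commute x (Lz A1 B1) := fun x hQ hz =>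
    (hQ.mul_right (hz.aeval_right B1)).sub_right (hz.aeval_right A1)
  have hDw : Commute Dw (Lz A1 B1) :=
    hLz Dw ((Commute.refl Dw).add_right commute_Dw_Mz) commute_Dz_Dw.symm
  have hP : Commute (Dz + Mw) (Lz A1 B1) :=
    hLz _ commute_Dz_add_Mw_Dw_add_Mz ((Commute.refl Dz).add_left commute_Dz_Mw.symm)
  exact (hP.mul_left (hDw.symm.aeval_right B2).symm).sub_left (hDw.symm.aeval_right A2).symm

section LeadingTerms

variable {A B A1 B1 A2 B2 : ℂ[X]} {a a1 a2 : ℕ} {μ : Coeffs}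

lemma Lw_apply_of_forall_lt (hA : A.natDegree ≤ a + 1) (hB : B.natDegree ≤ a) {j k : ℕ}
    (hμ : ∀ j' k', k' < k + (a + 1) → μ j' k' = 0) :
    Lw A B μ j k = -(A.coeff (a + 1) * μ j (k + (a + 1))) := by
  rw [Lw_apply, aeval_Dw_apply_eq_zero hB fun i _ => hμ _ _ (by omega),
    aeval_Dw_apply_eq_zero hB fun i _ => hμ _ _ (by omega),
    aeval_Dw_apply_of_forall_lt hA fun i _ => hμ _ _ (by omega)]
  ring

lemma Lz_apply_of_forall_lt (hA : A.natDegree ≤ a + 1) (hB : B.natDegree ≤ a) {j k : ℕ}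
    (hμ : ∀ j' k', j' < j + (a + 1) → k' ≤ k + 1 → μ j' k' = 0) :
    Lz A B μ j k = -(A.coeff (a + 1) * μ (j + (a + 1)) k) := by
  rw [Lz_apply, aeval_Dz_apply_eq_zero hB fun i _ => hμ _ _ (by omega) le_rfl,
    aeval_Dz_apply_eq_zero hB fun i _ => hμ _ _ (by omega) (by omega),
    aeval_Dz_apply_of_forall_lt hA fun i _ => hμ _ _ (by omega) (by omega)]
  ring

/-- In the row `k = a₂` the `∂_z`-equation reaches into column `a₂ + 1`; adding `B₁(∂_z)` applied
to the `∂_w`-equation cancels those values. The coupling `B₁[a₁] B₂[a₂]` vanishes unless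
`deg Bᵢ = aᵢ` for both `i`. -/
lemma Lz_Lw_combination_apply_of_forall (hA1 : A1.natDegree ≤ a1 + 1) (hB1 : B1.natDegree ≤ a1)
    (hA2 : A2.natDegree ≤ a2 + 1) (hB2 : B2.natDegree ≤ a2) {j : ℕ}
    (hμ : ∀ j' k', k' ≤ a2 → (j' < j + (a1 + 1) ∨ j' = j + (a1 + 1) ∧ k' < a2) → μ j' k' = 0) :
    A2.coeff (a2 + 1) * Lz A1 B1 μ j a2 + aeval Dz B1 (Lw A2 B2 μ) j 0 =
      (B1.coeff a1 * B2.coeff a2 - A1.coeff (a1 + 1) * A2.coeff (a2 + 1)) *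
        μ (j + (a1 + 1)) a2 := by
  have hLz : Lz A1 B1 μ j a2 = ∑ i ∈ range (a1 + 1), B1.coeff i * μ (j + i) (a2 + 1) -
      A1.coeff (a1 + 1) * μ (j + (a1 + 1)) a2 := by
    rw [Lz_apply, aeval_Dz_apply (Nat.lt_succ_of_le hB1),
      aeval_Dz_apply_eq_zero hB1 fun i _ => hμ _ _ le_rfl (Or.inl (by omega)),
      aeval_Dz_apply_of_forall_lt hA1 fun i _ => hμ _ _ le_rfl (Or.inl (by omega))]
    ring
  have hLw : ∀ i ∈ range (a1 + 1), B1.coeff i * Lw A2 B2 μ (j + i) 0 =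
      B1.coeff i * aeval Dw B2 μ (j + i + 1) 0 -
        A2.coeff (a2 + 1) * (B1.coeff i * μ (j + i) (a2 + 1)) := by
    intro i hi
    have hi := mem_range.1 hi
    rw [Lw_apply, aeval_Dw_apply_of_forall_lt hA2 fun i' _ => hμ _ _ (by omega) (Or.inl (by omega))]
    simp only [CharP.cast_eq_zero, zero_mul, zero_add]
    ring
  have hB2low : ∀ i < a1, aeval Dw B2 μ (j + i + 1) 0 = 0 := fun i _ =>
    aeval_Dw_apply_eq_zero hB2 fun i' _ => hμ _ _ (by omega) (Or.inl (by omega))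
  have hB2top : aeval Dw B2 μ (j + a1 + 1) 0 = B2.coeff a2 * μ (j + (a1 + 1)) a2 := by
    rw [aeval_Dw_apply_of_forall_lt hB2 fun i' _ => hμ _ _ (by omega) (Or.inr ⟨by omega, by omega⟩),
      zero_add, add_assoc]
  rw [hLz, aeval_Dz_apply (Nat.lt_succ_of_le hB1), sum_congr rfl hLw, sum_sub_distrib, ← mul_sum,
    sum_range_succ_mul_of_forall_lt _ hB2low, hB2top]
  ring

end LeadingTerms

lemma coeff_ne_zero_of_natDegree_eq_succ {R : Type*} [Semiring R] {p : R[X]} {n : ℕ}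
    (h : p.natDegree = n + 1) : p.coeff (n + 1) ≠ 0 := by
  rw [← h]
  exact leadingCoeff_ne_zero.2 (ne_zero_of_natDegree_gt (n := n) (by omega))

lemma eq_zero_of_Lw_eq_zero {A B : ℂ[X]} {a : ℕ} (hA : A.natDegree = a + 1)
    (hB : B.natDegree ≤ a) {μ : Coeffs} (hμ : Lw A B μ = 0) (hstrip : ∀ j k, k ≤ a → μ j k = 0) :
    μ = 0 := by
  suffices h : ∀ k j, μ j k = 0 from funext fun j => funext fun k => h k j
  intro k
  induction k using Nat.strong_induction_on with
  | _ k ih =>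
    intro j
    rcases le_or_gt k a with hk | hk
    · exact hstrip j k hk
    obtain ⟨k, rfl⟩ : ∃ k₀, k = k₀ + (a + 1) := ⟨k - (a + 1), by omega⟩
    have hlead := Lw_apply_of_forall_lt hA.le hB (j := j) fun j' k' hk' => ih k' hk' j'
    rw [hμ, Pi.zero_apply, Pi.zero_apply, zero_eq_neg] at hlead
    exact (mul_eq_zero.1 hlead).resolve_left (coeff_ne_zero_of_natDegree_eq_succ hA)

def recursionKey (a2 : ℕ) (p : ℕ × ℕ) : ℕ ×ₗ ℕ ×ₗ ℕ :=
  if p.2 ≤ a2 then toLex (0, toLex (p.1, p.2)) else toLex (p.2, toLex (0, 0))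

lemma recursionKey_lt_of_snd_lt {a2 j j' k k' : ℕ} (hk : a2 < k) (h : k' < k) :
    recursionKey a2 (j', k') < recursionKey a2 (j, k) := by
  unfold recursionKey
  split_ifs <;> simp [Prod.Lex.toLex_lt_toLex] <;> omega

lemma recursionKey_lt_of_fst_lt {a2 j j' k k' : ℕ} (hk : k ≤ a2) (hk' : k' ≤ a2) (h : j' < j) :
    recursionKey a2 (j', k') < recursionKey a2 (j, k) := by
  simp [recursionKey, hk, hk', Prod.Lex.toLex_lt_toLex, h]

lemma recursionKey_lt_of_lt_snd {a2 j k k' : ℕ} (hk : k ≤ a2) (h : k' < k) :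
    recursionKey a2 (j, k') < recursionKey a2 (j, k) := by
  simp [recursionKey, hk, h.le.trans hk, Prod.Lex.toLex_lt_toLex, h]

section Recursion

variable (A1 B1 A2 B2 : ℂ[X]) (a1 a2 : ℕ)

noncomputable def stepResidual (μ : Coeffs) (j k : ℕ) : ℂ :=
  if a2 < k then Lw A2 B2 μ j (k - (a2 + 1)) / A2.coeff (a2 + 1)
  else if k < a2 then Lz A1 B1 μ (j - (a1 + 1)) k / A1.coeff (a1 + 1)
  else (A2.coeff (a2 + 1) * Lz A1 B1 μ (j - (a1 + 1)) a2 +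
      aeval Dz B1 (Lw A2 B2 μ) (j - (a1 + 1)) 0) /
    (A1.coeff (a1 + 1) * A2.coeff (a2 + 1) - B1.coeff a1 * B2.coeff a2)

noncomputable def recursionStep (c : ℕ → ℕ → ℂ) (μ : Coeffs) : Coeffs := fun j k =>
  if j ≤ a1 ∧ k ≤ a2 then c j k else μ j k + stepResidual A1 B1 A2 B2 a1 a2 μ j k

lemma stepResidual_sub (μ ν : Coeffs) (j k : ℕ) :
    stepResidual A1 B1 A2 B2 a1 a2 (μ - ν) j k =
      stepResidual A1 B1 A2 B2 a1 a2 μ j k - stepResidual A1 B1 A2 B2 a1 a2 ν j k := by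
  simp only [stepResidual, map_sub, Pi.sub_apply]
  split_ifs <;> ring

variable {A1 B1 A2 B2 a1 a2}

lemma stepResidual_eq_neg (hA1 : A1.natDegree = a1 + 1) (hB1 : B1.natDegree ≤ a1)
    (hA2 : A2.natDegree = a2 + 1) (hB2 : B2.natDegree ≤ a2)
    (hdet : A1.coeff (a1 + 1) * A2.coeff (a2 + 1) ≠ B1.coeff a1 * B2.coeff a2)
    {μ : Coeffs} {j k : ℕ} (hjk : ¬(j ≤ a1 ∧ k ≤ a2))
    (hμ : ∀ p, recursionKey a2 p < recursionKey a2 (j, k) → μ p.1 p.2 = 0) :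
    stepResidual A1 B1 A2 B2 a1 a2 μ j k = -μ j k := by
  have hℓ1 := coeff_ne_zero_of_natDegree_eq_succ hA1
  have hℓ2 := coeff_ne_zero_of_natDegree_eq_succ hA2
  unfold stepResidual
  split_ifs with hk hk'
  · obtain ⟨k, rfl⟩ : ∃ k₀, k = k₀ + (a2 + 1) := ⟨k - (a2 + 1), by omega⟩
    rw [Nat.add_sub_cancel, Lw_apply_of_forall_lt hA2.le hB2
      fun j' k' hk' => hμ (j', k') (recursionKey_lt_of_snd_lt hk hk')]
    field_simp
  · obtain ⟨j, rfl⟩ : ∃ j₀, j = j₀ + (a1 + 1) := ⟨j - (a1 + 1), by omega⟩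
    rw [Nat.add_sub_cancel, Lz_apply_of_forall_lt hA1.le hB1
      fun j' k' hj' hk'' => hμ (j', k') (recursionKey_lt_of_fst_lt hk'.le (by omega) hj')]
    field_simp
  · obtain rfl : a2 = k := by omega
    obtain ⟨j, rfl⟩ : ∃ j₀, j = j₀ + (a1 + 1) := ⟨j - (a1 + 1), by omega⟩
    have hμ' : ∀ j' k', k' ≤ a2 → (j' < j + (a1 + 1) ∨ j' = j + (a1 + 1) ∧ k' < a2) →
        μ j' k' = 0 := by
      rintro j' k' hk' (hj' | ⟨rfl, hk'⟩)
      · exact hμ (j', k') (recursionKey_lt_of_fst_lt le_rfl hk' hj')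
      · exact hμ (_, k') (recursionKey_lt_of_lt_snd le_rfl hk')
    rw [Nat.add_sub_cancel, Lz_Lw_combination_apply_of_forall hA1.le hB1 hA2.le hB2 hμ',
      div_eq_iff (sub_ne_zero.2 hdet)]
    ring

lemma recursionStep_apply_congr (hA1 : A1.natDegree = a1 + 1) (hB1 : B1.natDegree ≤ a1)
    (hA2 : A2.natDegree = a2 + 1) (hB2 : B2.natDegree ≤ a2)
    (hdet : A1.coeff (a1 + 1) * A2.coeff (a2 + 1) ≠ B1.coeff a1 * B2.coeff a2)
    (c : ℕ → ℕ → ℂ) {μ ν : Coeffs} {j k : ℕ}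
    (hμν : ∀ p, recursionKey a2 p < recursionKey a2 (j, k) → μ p.1 p.2 = ν p.1 p.2) :
    recursionStep A1 B1 A2 B2 a1 a2 c μ j k = recursionStep A1 B1 A2 B2 a1 a2 c ν j k := by
  unfold recursionStep
  split_ifs with hjk
  · rfl
  have h := stepResidual_eq_neg hA1 hB1 hA2 hB2 hdet hjk (μ := μ - ν)
    fun p hp => sub_eq_zero.2 (hμν p hp)
  rw [stepResidual_sub, Pi.sub_apply, Pi.sub_apply] at h
  linear_combination h

lemma recursionStep_eq_self_iff (hA1 : A1.natDegree = a1 + 1) (hA2 : A2.natDegree = a2 + 1)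
    (hB2 : B2.natDegree ≤ a2)
    (hdet : A1.coeff (a1 + 1) * A2.coeff (a2 + 1) ≠ B1.coeff a1 * B2.coeff a2)
    (c : ℕ → ℕ → ℂ) (μ : Coeffs) :
    recursionStep A1 B1 A2 B2 a1 a2 c μ = μ ↔
      μ ∈ LinearMap.ker (Lw A2 B2) ⊓ LinearMap.ker (Lz A1 B1) ∧
        ∀ j k, j ≤ a1 → k ≤ a2 → μ j k = c j k := by
  have hℓ1 := coeff_ne_zero_of_natDegree_eq_succ hA1
  have hℓ2 := coeff_ne_zero_of_natDegree_eq_succ hA2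
  have hdet' := sub_ne_zero.2 hdet
  rw [Submodule.mem_inf, LinearMap.mem_ker, LinearMap.mem_ker]
  constructor
  · intro h
    have h' : ∀ j k, recursionStep A1 B1 A2 B2 a1 a2 c μ j k = μ j k := fun j k => by rw [h]
    refine ⟨?_, fun j k hj hk => by simpa [recursionStep, hj, hk] using (h' j k).symm⟩
    have hres : ∀ j k, ¬(j ≤ a1 ∧ k ≤ a2) → stepResidual A1 B1 A2 B2 a1 a2 μ j k = 0 :=
      fun j k hjk => by simpa [recursionStep, hjk] using h' j k
    have hLw : Lw A2 B2 μ = 0 := funext fun j => funext fun k => by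
      have := hres j (k + (a2 + 1)) (by omega)
      rw [stepResidual, if_pos (by omega), Nat.add_sub_cancel, div_eq_zero_iff] at this
      exact this.resolve_right hℓ2
    refine ⟨hLw, eq_zero_of_Lw_eq_zero hA2 hB2 ?_ fun j k hk => ?_⟩
    · rw [← Module.End.mul_apply, (commute_Lw_Lz A1 B1 A2 B2).eq, Module.End.mul_apply, hLw,
        map_zero]
    · have := hres (j + (a1 + 1)) k (by omega)
      rw [stepResidual, if_neg hk.not_gt, Nat.add_sub_cancel] at this
      rcases hk.lt_or_eq with hk | rfl
      · rwa [if_pos hk, div_eq_zero_iff, or_iff_left hℓ1] at this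
      · rwa [if_neg (lt_irrefl _), hLw, map_zero, Pi.zero_apply, Pi.zero_apply, add_zero,
          div_eq_zero_iff, or_iff_left hdet', mul_eq_zero, or_iff_right hℓ2] at this
  · rintro ⟨⟨hLw, hLz⟩, hc⟩
    funext j k
    unfold recursionStep
    split_ifs with hjk
    · exact (hc j k hjk.1 hjk.2).symm
    · simp [stepResidual, hLw, hLz]

lemma existsUnique_recursionStep_eq_self (hA1 : A1.natDegree = a1 + 1)
    (hB1 : B1.natDegree ≤ a1) (hA2 : A2.natDegree = a2 + 1) (hB2 : B2.natDegree ≤ a2)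
    (hdet : A1.coeff (a1 + 1) * A2.coeff (a2 + 1) ≠ B1.coeff a1 * B2.coeff a2)
    (c : ℕ → ℕ → ℂ) : ∃! μ : Coeffs, recursionStep A1 B1 A2 B2 a1 a2 c μ = μ := by
  have h := (InvImage.wf (recursionKey a2) wellFounded_lt).existsUnique_fixedPoint
    (fun ν p => recursionStep A1 B1 A2 B2 a1 a2 c (Function.curry ν) p.1 p.2)
    fun μ ν p hμν => recursionStep_apply_congr hA1 hB1 hA2 hB2 hdet c fun q hq => hμν q hq
  refine (Equiv.curry ℕ ℕ ℂ).existsUnique_congr (fun ν => ?_) |>.1 h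
  simp [funext_iff, Prod.forall]

end Recursion

theorem finrank_ker_Lw_inf_ker_Lz {A1 B1 A2 B2 : ℂ[X]} {a1 a2 : ℕ}
    (hA1 : A1.natDegree = a1 + 1) (hB1 : B1.natDegree ≤ a1)
    (hA2 : A2.natDegree = a2 + 1) (hB2 : B2.natDegree ≤ a2)
    (hdet : A1.coeff (a1 + 1) * A2.coeff (a2 + 1) ≠ B1.coeff a1 * B2.coeff a2) :
    Module.finrank ℂ ↥(LinearMap.ker (Lw A2 B2) ⊓ LinearMap.ker (Lz A1 B1)) =
      (a1 + 1) * (a2 + 1) := by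
  have hfix := existsUnique_recursionStep_eq_self hA1 hB1 hA2 hB2 hdet
  have hiff := recursionStep_eq_self_iff hA1 hA2 hB2 hdet
  let restrict : ↥(LinearMap.ker (Lw A2 B2) ⊓ LinearMap.ker (Lz A1 B1)) →ₗ[ℂ]
      (Fin (a1 + 1) × Fin (a2 + 1) → ℂ) :=
    { toFun μ p := μ.1 p.1 p.2
      map_add' _ _ := rfl
      map_smul' _ _ := rfl }
  have hbij : Function.Bijective restrict := by
    refine ⟨fun μ ν hμν => Subtype.ext ?_, fun v => ?_⟩
    · have hν : ∀ j k, j ≤ a1 → k ≤ a2 → ν.1 j k = μ.1 j k := fun j k hj hk =>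
        (congrFun hμν (⟨j, Nat.lt_succ_of_le hj⟩, ⟨k, Nat.lt_succ_of_le hk⟩)).symm
      exact (hfix μ.1).unique ((hiff _ _).2 ⟨μ.2, fun _ _ _ _ => rfl⟩) ((hiff _ _).2 ⟨ν.2, hν⟩)
    let c j k := if h : j < a1 + 1 ∧ k < a2 + 1 then v (⟨j, h.1⟩, ⟨k, h.2⟩) else 0
    obtain ⟨μ, hμ, -⟩ := hfix c
    obtain ⟨hV, hc⟩ := (hiff c μ).1 hμ
    refine ⟨⟨μ, hV⟩, funext fun p => ?_⟩
    change μ p.1 p.2 = v p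
    rw [hc _ _ (Nat.lt_succ_iff.1 p.1.2) (Nat.lt_succ_iff.1 p.2.2)]
    exact dif_pos ⟨p.1.2, p.2.2⟩
  rw [(LinearEquiv.ofBijective restrict hbij).finrank_eq, Module.finrank_fintype_fun_eq_card,
    Fintype.card_prod, Fintype.card_fin, Fintype.card_fin]

lemma coeff_polyOf (n : ℕ) (c : ℕ → ℂ) (i : ℕ) :
    (polyOf n c).coeff i = if i ≤ n then c i else 0 := by
  simp [polyOf, coeff_C_mul, coeff_X_pow]

lemma natDegree_polyOf_le (n : ℕ) (c : ℕ → ℂ) : (polyOf n c).natDegree ≤ n :=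
  natDegree_le_iff_coeff_eq_zero.2 fun i hi => by
    rw [coeff_polyOf, if_neg (not_le.2 hi)]

lemma natDegree_polyOf {n : ℕ} {c : ℕ → ℂ} (hc : c n ≠ 0) : (polyOf n c).natDegree = n :=
  natDegree_eq_of_le_of_coeff_ne_zero (natDegree_polyOf_le n c) <| by
    rwa [coeff_polyOf, if_pos le_rfl]

/-- under the degree assumptions `deg B_i + 1 ≤ deg A_i = a_i + 1`
(with the nondegeneracy determinant condition in the borderline case), the space of
formal power series solutions of the system `[(∂z+w)B₂(∂w)-A₂(∂w)]F = 0`,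
`[(∂w+z)B₁(∂z)-A₁(∂z)]F = 0` has dimension exactly `(a₁+1)(a₂+1)`. -/
theorem stmt_8 (a1 b1 a2 b2 : ℕ) (α1 β1 α2 β2 : ℕ → ℂ)
    (hα1 : α1 (a1 + 1) ≠ 0) (hα2 : α2 (a2 + 1) ≠ 0)
    (hdeg1 : b1 + 1 ≤ a1) (hdeg2 : b2 + 1 ≤ a2)
    (hborder : a1 = b1 + 1 → a2 = b2 + 1 →
      α1 (a1 + 1) * α2 (a2 + 1) - β1 (b1 + 1) * β2 (b2 + 1) ≠ 0) :
    letI A1 := polyOf (a1 + 1) α1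
    letI B1 := polyOf (b1 + 1) β1
    letI A2 := polyOf (a2 + 1) α2
    letI B2 := polyOf (b2 + 1) β2
    Module.finrank ℂ
      ↥(LinearMap.ker ((Dz + Mw) * Polynomial.aeval Dw B2 - Polynomial.aeval Dw A2) ⊓
        LinearMap.ker ((Dw + Mz) * Polynomial.aeval Dz B1 - Polynomial.aeval Dz A1)) =
      (a1 + 1) * (a2 + 1) := by
  refine finrank_ker_Lw_inf_ker_Lz (natDegree_polyOf hα1) ((natDegree_polyOf_le _ _).trans hdeg1)
    (natDegree_polyOf hα2) ((natDegree_polyOf_le _ _).trans hdeg2) ?_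
  simp only [coeff_polyOf, le_rfl, if_true]
  by_cases hb : a1 = b1 + 1 ∧ a2 = b2 + 1
  · obtain ⟨rfl, rfl⟩ := hb
    simpa [sub_eq_zero] using hborder rfl rfl
  · have : ¬a1 ≤ b1 + 1 ∨ ¬a2 ≤ b2 + 1 := by omega
    rcases this with h | h <;> simp [h, hα1, hα2]
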